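/- arXiv:1511.02334 — 5 statements merged into one kernel-verified Lean document; each statement's English description precedes it below -/
import Mathlib

section
/- Let C be a function from the 2-element subsets of {1,2,3,4} to {0,1} such that for all pairwise distinct 2-element subsets d₁, d₂, d₃ with |d₁ ∩ d₂ ∩ d₃| = 1, both (C(d₁) = 0 iff C(d₂) = C(d₃)) and (C(d₁) = 1 iff C(d₂) ≠ C(d₃)) hold. Then exactly one of the following three scenarios occurs: (i) C(d) = 0 for all six 2-element subsets d; (ii) there exists x ∈ {1,2,3,4} such that C(d) = 0 iff x ∈ d (so exactly three subsets are colored 0); (iii) there exists a 2-element subset d₀ such that C(d) = 0 iff d = d₀ or d = {1,2,3,4} ∖ d₀ (so exactly two subsets are colored 0). -/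
open Finset

/-- Scenario (i): all six 2-element subsets are colored 0. -/
def Scenario1 (C : Finset ℕ → ℕ) : Prop :=
  ∀ d ⊆ ({1, 2, 3, 4} : Finset ℕ), d.card = 2 → C d = 0

/-- Scenario (ii): there is a point `x` such that exactly the 2-element subsets
containing `x` are colored 0. -/
def Scenario2 (C : Finset ℕ → ℕ) : Prop :=
  ∃ x ∈ ({1, 2, 3, 4} : Finset ℕ),
    ∀ d ⊆ ({1, 2, 3, 4} : Finset ℕ), d.card = 2 → (C d = 0 ↔ x ∈ d)

/-- Scenario (iii): there is a 2-element subset `d₀` such that exactly `d₀` and its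
complement are colored 0. -/
def Scenario3 (C : Finset ℕ → ℕ) : Prop :=
  ∃ d₀ ⊆ ({1, 2, 3, 4} : Finset ℕ), d₀.card = 2 ∧
    ∀ d ⊆ ({1, 2, 3, 4} : Finset ℕ), d.card = 2 →
      (C d = 0 ↔ (d = d₀ ∨ d = ({1, 2, 3, 4} : Finset ℕ) \ d₀))

/-!
Read the pairs colored 0 as the edges of a subgraph of `K₄` on `{1, 2, 3, 4}`. The triples
the law applies to are exactly the three pairs through a common point `x`, and for 0/1 values
the law says that an odd number of them is colored 0: every vertex has odd degree. The only
such subgraphs of `K₄` are `K₄` itself, the stars and the perfect matchings, i.e. scenarios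
(i), (ii) and (iii); they have 6, 3 and 2 edges, so no two scenarios hold at once.
-/

abbrev pairs : Finset (Finset ℕ) := powersetCard 2 {1, 2, 3, 4}

def starAt (x : ℕ) : Finset (Finset ℕ) := {d ∈ pairs | x ∈ d}

def matching (d₀ : Finset ℕ) : Finset (Finset ℕ) := {d₀, {1, 2, 3, 4} \ d₀}

def zeroSet (C : Finset ℕ → ℕ) : Finset (Finset ℕ) := {d ∈ pairs | C d = 0}

lemma zeroSet_eq_iff {C : Finset ℕ → ℕ} {T : Finset (Finset ℕ)} (hT : T ⊆ pairs) :
    zeroSet C = T ↔ ∀ d ⊆ ({1, 2, 3, 4} : Finset ℕ), d.card = 2 → (C d = 0 ↔ d ∈ T) := by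
  have hT' : ∀ d ∈ T, d ⊆ {1, 2, 3, 4} ∧ d.card = 2 := fun d hd => mem_powersetCard.1 (hT hd)
  simp only [Finset.ext_iff, zeroSet, mem_filter, mem_powersetCard]
  grind

lemma starAt_subset_pairs (x : ℕ) : starAt x ⊆ pairs :=
  filter_subset _ _

lemma matching_subset_pairs : ∀ d₀ ∈ pairs, matching d₀ ⊆ pairs := by
  decide

lemma scenario1_iff (C : Finset ℕ → ℕ) : Scenario1 C ↔ zeroSet C = pairs := by
  rw [zeroSet_eq_iff subset_rfl]
  simp +contextual [Scenario1, mem_powersetCard]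

lemma scenario2_iff (C : Finset ℕ → ℕ) :
    Scenario2 C ↔ ∃ x ∈ ({1, 2, 3, 4} : Finset ℕ), zeroSet C = starAt x := by
  unfold Scenario2
  refine exists_congr fun x => and_congr_right fun _ => ?_
  rw [zeroSet_eq_iff (starAt_subset_pairs x)]
  simp +contextual [starAt, mem_powersetCard]

lemma scenario3_iff (C : Finset ℕ → ℕ) :
    Scenario3 C ↔ ∃ d₀ ∈ pairs, zeroSet C = matching d₀ := by
  simp only [Scenario3, mem_powersetCard, and_assoc]
  refine exists_congr fun d₀ => and_congr_right fun hd₀ => and_congr_right fun hc₀ => ?_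
  rw [zeroSet_eq_iff (matching_subset_pairs d₀ (mem_powersetCard.2 ⟨hd₀, hc₀⟩))]
  simp [matching]

lemma odd_card_filter_triple {α : Type*} [DecidableEq α] (p : α → Prop) [DecidablePred p]
    {a b c : α} (hab : a ≠ b) (hac : a ≠ c) (hbc : b ≠ c) :
    Odd #(({a, b, c} : Finset α).filter p) ↔ (p a ↔ (p b ↔ p c)) := by
  by_cases ha : p a <;> by_cases hb : p b <;> by_cases hc : p c <;>
    simp [filter_insert, filter_singleton, ha, hb, hc, hab, hac, hbc, Nat.odd_iff]

lemma exists_triple_eq_starAt : ∀ x ∈ ({1, 2, 3, 4} : Finset ℕ),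
    ∃ d₁ ∈ pairs, ∃ d₂ ∈ pairs, ∃ d₃ ∈ pairs,
      d₁ ≠ d₂ ∧ d₁ ≠ d₃ ∧ d₂ ≠ d₃ ∧ #(d₁ ∩ d₂ ∩ d₃) = 1 ∧ starAt x = {d₁, d₂, d₃} := by
  decide

lemma odd_card_zeroSet_filter_mem {C : Finset ℕ → ℕ} (hrange : ∀ d ∈ pairs, C d = 0 ∨ C d = 1)
    (hlaw : ∀ d₁ ∈ pairs, ∀ d₂ ∈ pairs, ∀ d₃ ∈ pairs, d₁ ≠ d₂ → d₁ ≠ d₃ → d₂ ≠ d₃ →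
      #(d₁ ∩ d₂ ∩ d₃) = 1 → (C d₁ = 0 ↔ C d₂ = C d₃))
    {x : ℕ} (hx : x ∈ ({1, 2, 3, 4} : Finset ℕ)) : Odd #{d ∈ zeroSet C | x ∈ d} := by
  obtain ⟨d₁, h₁, d₂, h₂, d₃, h₃, h12, h13, h23, hcard, hstar⟩ := exists_triple_eq_starAt x hx
  rw [zeroSet, filter_comm, ← starAt, hstar, odd_card_filter_triple _ h12 h13 h23,
    hlaw d₁ h₁ d₂ h₂ d₃ h₃ h12 h13 h23 hcard]
  rcases hrange d₂ h₂ with h | h <;> rcases hrange d₃ h₃ with h' | h' <;> simp [h, h']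

theorem eq_pairs_or_starAt_or_matching_of_odd :
    ∀ Z ∈ pairs.powerset, (∀ x ∈ ({1, 2, 3, 4} : Finset ℕ), Odd #{d ∈ Z | x ∈ d}) →
      Z = pairs ∨ (∃ x ∈ ({1, 2, 3, 4} : Finset ℕ), Z = starAt x) ∨
        ∃ d₀ ∈ pairs, Z = matching d₀ := by
  decide

lemma scenario_of_odd {C : Finset ℕ → ℕ}
    (hodd : ∀ x ∈ ({1, 2, 3, 4} : Finset ℕ), Odd #{d ∈ zeroSet C | x ∈ d}) :
    Scenario1 C ∨ Scenario2 C ∨ Scenario3 C := by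
  rw [scenario1_iff, scenario2_iff, scenario3_iff]
  exact eq_pairs_or_starAt_or_matching_of_odd _ (mem_powerset.2 (filter_subset _ _)) hodd

lemma Scenario1.card_zeroSet {C : Finset ℕ → ℕ} (h : Scenario1 C) : #(zeroSet C) = 6 := by
  rw [(scenario1_iff C).1 h]
  decide

lemma card_starAt : ∀ x ∈ ({1, 2, 3, 4} : Finset ℕ), #(starAt x) = 3 := by
  decide

lemma Scenario2.card_zeroSet {C : Finset ℕ → ℕ} (h : Scenario2 C) : #(zeroSet C) = 3 := by
  obtain ⟨x, hx, hZ⟩ := (scenario2_iff C).1 h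
  rw [hZ, card_starAt x hx]

lemma card_matching : ∀ d₀ ∈ pairs, #(matching d₀) = 2 := by
  decide

lemma Scenario3.card_zeroSet {C : Finset ℕ → ℕ} (h : Scenario3 C) : #(zeroSet C) = 2 := by
  obtain ⟨d₀, hd₀, hZ⟩ := (scenario3_iff C).1 h
  rw [hZ, card_matching d₀ hd₀]

/-- A {0,1}-coloring of the 2-element subsets of {1,2,3,4} satisfying the two local laws
falls in exactly one of the three scenarios. -/
theorem stmt_8 (C : Finset ℕ → ℕ)
    (hrange : ∀ d ⊆ ({1, 2, 3, 4} : Finset ℕ), d.card = 2 → C d = 0 ∨ C d = 1)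
    (hlaw : ∀ d₁ ⊆ ({1, 2, 3, 4} : Finset ℕ), ∀ d₂ ⊆ ({1, 2, 3, 4} : Finset ℕ),
      ∀ d₃ ⊆ ({1, 2, 3, 4} : Finset ℕ),
      d₁.card = 2 → d₂.card = 2 → d₃.card = 2 →
      d₁ ≠ d₂ → d₁ ≠ d₃ → d₂ ≠ d₃ → (d₁ ∩ d₂ ∩ d₃).card = 1 →
      (C d₁ = 0 ↔ C d₂ = C d₃) ∧ (C d₁ = 1 ↔ C d₂ ≠ C d₃)) :
    (Scenario1 C ∧ ¬ Scenario2 C ∧ ¬ Scenario3 C) ∨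
    (¬ Scenario1 C ∧ Scenario2 C ∧ ¬ Scenario3 C) ∨
    (¬ Scenario1 C ∧ ¬ Scenario2 C ∧ Scenario3 C) := by
  have hodd : ∀ x ∈ ({1, 2, 3, 4} : Finset ℕ), Odd #{d ∈ zeroSet C | x ∈ d} := by
    refine fun x hx => odd_card_zeroSet_filter_mem (fun d hd => ?_)
      (fun d₁ h₁ d₂ h₂ d₃ h₃ h12 h13 h23 hcard => ?_) hx
    · exact hrange d (mem_powersetCard.1 hd).1 (mem_powersetCard.1 hd).2
    · rw [mem_powersetCard] at h₁ h₂ h₃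
      exact (hlaw d₁ h₁.1 d₂ h₂.1 d₃ h₃.1 h₁.2 h₂.2 h₃.2 h12 h13 h23 hcard).1
  have h12 : ¬ (Scenario1 C ∧ Scenario2 C) := fun ⟨h1, h2⟩ => by
    have := h1.card_zeroSet; have := h2.card_zeroSet; omega
  have h13 : ¬ (Scenario1 C ∧ Scenario3 C) := fun ⟨h1, h3⟩ => by
    have := h1.card_zeroSet; have := h3.card_zeroSet; omega
  have h23 : ¬ (Scenario2 C ∧ Scenario3 C) := fun ⟨h2, h3⟩ => by
    have := h2.card_zeroSet; have := h3.card_zeroSet; omega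
  have := scenario_of_odd hodd
  tauto
end

section
/- For every n ≥ 4, every sub div point set of n−1 points of Conv_n is isomorphic to Conv_{n−1}. -/
/-!
Write `Ps = {1, …, n} ∖ {m}`. A partition into two (possibly empty) divs is determined by its
"same div" relation, and the defining property of a sub div point set says that, for a divider
`d ⊆ Ps`, two points of `Ps ∖ d` lie in the same div of `Y` iff they do in `Conv_n`. So every
dividon of `Y` is the dividon of `Conv_n` restricted to `Ps`: its divs are the points of `Ps`
strictly between the two points of `d` and those outside them. Only the order of the points
enters, so the order-preserving relabelling `Ps → {1, …, n-1}` that closes the gap at `m`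
is an isomorphism onto `Conv_{n-1}`.
-/

open Finset

/-- A (unit) dividon: an ordered pair of a divider and a set of divs. -/
abbrev Dividon : Type := Finset ℕ × Finset (Finset ℕ)

/-- A candidate (unit) div point set: a pair of a point set and a set of dividons. -/
abbrev PreDPS : Type := Finset ℕ × Finset Dividon

/-- The union `⋃δ` of a set of divs. -/
def unionOf (δ : Finset (Finset ℕ)) : Finset ℕ := δ.sup id

/-- `ξ(D) = π₁(D) ∪ ⋃π₂(D)`. -/
def xi (D : Dividon) : Finset ℕ := D.1 ∪ unionOf D.2

/-- `D = (d, δ)` is a dividon over the point set `P`. -/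
def IsDividon (P : Finset ℕ) (D : Dividon) : Prop :=
  D.1.card = 2 ∧ D.1 ⊆ P ∧
    ∃ A B : Finset ℕ, A ≠ B ∧ D.2 = {A, B} ∧ A ∪ B = P \ D.1 ∧ A ∩ B = ∅

/-- `X` is a div point set. -/
def IsDPS (X : PreDPS) : Prop :=
  X.1.Nonempty ∧ X.2.card = Nat.choose X.1.card 2 ∧
    (∀ D ∈ X.2, IsDividon X.1 D) ∧
    ∀ D₁ ∈ X.2, ∀ D₂ ∈ X.2, D₁.1 = D₂.1 → D₁ = D₂

/-- `φ(δ,T) = 1` if the two TBD points of `T` lie in the same div of `δ`,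
`φ(δ,T) = 0` otherwise. -/
def phi (δ : Finset (Finset ℕ)) (T : Finset ℕ) : ℕ :=
  if ∃ dv ∈ δ, (T ∩ dv).card = 2 then 1 else 0

/-- `ψ(δ) = 1` if some div of `δ` has two elements, `ψ(δ) = 0` otherwise. -/
def psi (δ : Finset (Finset ℕ)) : ℕ :=
  if ∃ dv ∈ δ, dv.card = 2 then 1 else 0

/-- Laws (L1), (L2), (L3) for div point sets. -/
def LawsDPS (X : PreDPS) : Prop :=
  (∀ R ⊆ X.1, R.card = 4 →
    ∀ D₁ ∈ X.2, ∀ D₂ ∈ X.2, ∀ D₃ ∈ X.2,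
      D₁.1 ∪ D₂.1 ∪ D₃.1 = R → (D₁.1 ∩ D₂.1 ∩ D₃.1).card = 1 →
      (phi D₁.2 (R \ D₁.1) = 0 ↔ phi D₂.2 (R \ D₂.1) = phi D₃.2 (R \ D₃.1))) ∧
  (∀ R ⊆ X.1, R.card = 4 →
    ∀ D₁ ∈ X.2, ∀ D₂ ∈ X.2, ∀ D₃ ∈ X.2,
      D₁.1 ∪ D₂.1 ∪ D₃.1 = R → (D₁.1 ∩ D₂.1 ∩ D₃.1).card = 1 →
      (phi D₁.2 (R \ D₁.1) = 1 ↔ phi D₂.2 (R \ D₂.1) ≠ phi D₃.2 (R \ D₃.1))) ∧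
  (∀ R ⊆ X.1, R.card = 4 →
    ∀ D₁ ∈ X.2, ∀ D₂ ∈ X.2, ∀ D₃ ∈ X.2,
      D₁ ≠ D₂ → D₁ ≠ D₃ → D₂ ≠ D₃ →
      D₁.1 ∪ D₂.1 ∪ D₃.1 ⊆ R → (D₁.1 ∪ D₂.1 ∪ D₃.1).card = 3 →
      phi D₁.2 (R \ D₁.1) = 0 → phi D₂.2 (R \ D₂.1) = 0 →
      phi D₃.2 (R \ D₃.1) = 1)

/-- The class DPS⁺: div point sets satisfying (L1), (L2), (L3). -/
def DPSplus (X : PreDPS) : Prop := IsDPS X ∧ LawsDPS X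

/-- `D = (d, δ)` is a unit dividon over the point set `P`. -/
def IsUnitDividon (P : Finset ℕ) (D : Dividon) : Prop :=
  D.1.card = 2 ∧ D.1 ⊆ P ∧
    ∃ A B : Finset ℕ, A ≠ B ∧ D.2 = {A, B} ∧ (A ∪ B).card = 2 ∧
      A ∪ B ⊆ P \ D.1 ∧ A ∩ B = ∅

/-- `U` is a unit div point set. -/
def IsUDPS (U : PreDPS) : Prop :=
  U.1.Nonempty ∧
    U.2.card = Nat.choose U.1.card 2 * Nat.choose (U.1.card - 2) 2 ∧
    (∀ D ∈ U.2, IsUnitDividon U.1 D) ∧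
    ∀ D₁ ∈ U.2, ∀ D₂ ∈ U.2,
      D₁.1 = D₂.1 → unionOf D₁.2 = unionOf D₂.2 → D₁ = D₂

/-- Laws (U1), (U2), (U3) for unit div point sets. -/
def LawsUDPS (U : PreDPS) : Prop :=
  (∀ R ⊆ U.1, R.card = 4 →
    ∀ D₁ ∈ U.2, ∀ D₂ ∈ U.2, ∀ D₃ ∈ U.2,
      D₁ ≠ D₂ → D₁ ≠ D₃ → D₂ ≠ D₃ →
      xi D₁ = R → xi D₂ = R → xi D₃ = R →
      (D₁.1 ∩ D₂.1 ∩ D₃.1).card = 1 →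
      (psi D₁.2 = 0 ↔ psi D₂.2 = psi D₃.2)) ∧
  (∀ R ⊆ U.1, R.card = 4 →
    ∀ D₁ ∈ U.2, ∀ D₂ ∈ U.2, ∀ D₃ ∈ U.2,
      D₁ ≠ D₂ → D₁ ≠ D₃ → D₂ ≠ D₃ →
      xi D₁ = R → xi D₂ = R → xi D₃ = R →
      (D₁.1 ∩ D₂.1 ∩ D₃.1).card = 1 →
      (psi D₁.2 = 1 ↔ psi D₂.2 ≠ psi D₃.2)) ∧
  (∀ R ⊆ U.1, R.card = 4 →
    ∀ D₁ ∈ U.2, ∀ D₂ ∈ U.2, ∀ D₃ ∈ U.2,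
      D₁ ≠ D₂ → D₁ ≠ D₃ → D₂ ≠ D₃ →
      xi D₁ = R → xi D₂ = R → xi D₃ = R →
      (D₁.1 ∪ D₂.1 ∪ D₃.1).card = 3 →
      psi D₁.2 = 0 → psi D₂.2 = 0 → psi D₃.2 = 1)

/-- The class UDPS⁺: unit div point sets satisfying (U1), (U2), (U3). -/
def UDPSplus (U : PreDPS) : Prop := IsUDPS U ∧ LawsUDPS U

/-- `F_udps`: breaks every dividon of a div point set into unit dividons,
one for each 2-element subset `T = {a,b}` of the TBD points: the unit dividon is
`(d, {{a,b},∅})` if `a` and `b` lie in the same div, and `(d, {{a},{b}})` otherwise. -/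
def Fudps (X : PreDPS) : PreDPS :=
  (X.1, X.2.biUnion fun D =>
    ((X.1 \ D.1).powersetCard 2).image fun T =>
      (D.1, if ∃ dv ∈ D.2, T ⊆ dv then ({T, ∅} : Finset (Finset ℕ))
            else T.image fun a => ({a} : Finset ℕ)))

/-- `Y` is the sub div point set of `X` on the point set `Ps` (where `4 ≤ |Ps|`):
the unique div point set with point set `Ps` whose image under `F_udps` has exactly
the unit dividons `D` of `F_udps X` with `ξ(D) ⊆ Ps`. -/
def IsSdps (X : PreDPS) (Ps : Finset ℕ) (Y : PreDPS) : Prop :=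
  Ps ⊆ X.1 ∧ 4 ≤ Ps.card ∧ IsDPS Y ∧ Y.1 = Ps ∧
    (Fudps Y).2 = (Fudps X).2.filter fun D => xi D ⊆ Ps

/-- Isomorphism of (candidate) div point sets. -/
def Isom (X Y : PreDPS) : Prop :=
  ∃ f : ℕ → ℕ, Set.BijOn f ↑X.1 ↑Y.1 ∧
    ∀ D ∈ X.2, (D.1.image f, D.2.image (Finset.image f)) ∈ Y.2

/-- Isomorphism of sets of (unit) dividons. -/
def OmegaIsom (Ω₁ Ω₂ : Finset Dividon) : Prop :=
  Ω₁.card = Ω₂.card ∧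
    ∃ f : ℕ → ℕ, Set.BijOn f ↑(Ω₁.sup xi) ↑(Ω₂.sup xi) ∧
      ∀ D ∈ Ω₁, (D.1.image f, D.2.image (Finset.image f)) ∈ Ω₂

/-- The div point set Conc₄¹. -/
def Conc41 : PreDPS :=
  ({1, 2, 3, 4},
   {({1, 2}, {{3}, {4}}), ({1, 3}, {{2}, {4}}), ({1, 4}, {{2}, {3}}),
    ({2, 3}, {{1, 4}, ∅}), ({2, 4}, {{1, 3}, ∅}), ({3, 4}, {{1, 2}, ∅})})

/-- The div point set Conv₄. -/
def Conv4 : PreDPS :=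
  ({1, 2, 3, 4},
   {({1, 2}, {{3, 4}, ∅}), ({1, 3}, {{2}, {4}}), ({1, 4}, {{2, 3}, ∅}),
    ({2, 3}, {{1, 4}, ∅}), ({2, 4}, {{1}, {3}}), ({3, 4}, {{1, 2}, ∅})})

/-- The div point set Conv_n on `{1, …, n}`: the dividon with divider `d = {i,j}`,
`i < j`, has divs `{p : i < p < j}` and `{p : p < i or p > j}`. -/
def ConvN (n : ℕ) : PreDPS :=
  (Finset.Icc 1 n,
   ((Finset.Icc 1 n).powersetCard 2).image fun d =>
     (d, ({(Finset.Icc 1 n).filter fun p => (∃ i ∈ d, i < p) ∧ ∃ j ∈ d, p < j,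
           (Finset.Icc 1 n).filter fun p =>
             (∀ i ∈ d, p < i) ∨ ∀ i ∈ d, i < p} : Finset (Finset ℕ))))

def SameDiv {α : Type*} (δ : Finset (Finset α)) (a b : α) : Prop :=
  ∃ X ∈ δ, a ∈ X ∧ b ∈ X

section Partition

variable {α : Type*} [DecidableEq α] {A B M O : Finset α}

theorem sameDiv_pair_iff_of_mem_left (hAB : Disjoint A B) {a : α} (ha : a ∈ A) (x : α) :
    SameDiv {A, B} a x ↔ x ∈ A := by
  simp [SameDiv, ha, Finset.disjoint_left.1 hAB ha]

theorem mem_pair_of_sameDiv_iff (hAB : Disjoint A B) (hMO : Disjoint M O)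
    (h : ∀ a b, SameDiv {A, B} a b ↔ SameDiv {M, O} a b) : A ∈ ({M, O} : Finset (Finset α)) := by
  rcases A.eq_empty_or_nonempty with rfl | ⟨a, ha⟩
  · by_contra hne
    obtain ⟨⟨m, hm⟩, ⟨o, ho⟩⟩ : M.Nonempty ∧ O.Nonempty := by
      simp only [mem_insert, mem_singleton, not_or] at hne
      exact ⟨nonempty_iff_ne_empty.2 (Ne.symm hne.1), nonempty_iff_ne_empty.2 (Ne.symm hne.2)⟩
    have hB : ∀ x, SameDiv {∅, B} x x ↔ x ∈ B := by simp [SameDiv]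
    have hmB := (hB m).1 ((h m m).2 ⟨M, by simp, hm, hm⟩)
    have hoB := (hB o).1 ((h o o).2 ⟨O, by simp, ho, ho⟩)
    obtain ⟨X, hX, hmX, hoX⟩ := (h m o).1 ⟨B, by simp, hmB, hoB⟩
    rcases mem_insert.1 hX with rfl | hX
    · exact Finset.disjoint_left.1 hMO hoX ho
    · rw [mem_singleton.1 hX] at hmX
      exact Finset.disjoint_left.1 hMO hm hmX
  · obtain ⟨X, hX, haX, -⟩ := (h a a).1 ⟨A, mem_insert_self _ _, ha, ha⟩
    rcases mem_insert.1 hX with rfl | hX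
    · have : A = X := by
        ext x
        rw [← sameDiv_pair_iff_of_mem_left hAB ha, h, sameDiv_pair_iff_of_mem_left hMO haX]
      exact this ▸ mem_insert_self _ _
    · rw [mem_singleton.1 hX] at haX
      have : A = O := by
        ext x
        rw [← sameDiv_pair_iff_of_mem_left hAB ha, h, pair_comm,
          sameDiv_pair_iff_of_mem_left hMO.symm haX]
      exact this ▸ mem_insert_of_mem (mem_singleton_self _)

theorem pair_subset_pair_of_sameDiv_iff (hAB : Disjoint A B) (hMO : Disjoint M O)
    (h : ∀ a b, SameDiv {A, B} a b ↔ SameDiv {M, O} a b) :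
    ({A, B} : Finset (Finset α)) ⊆ {M, O} := by
  refine insert_subset_iff.2 ⟨mem_pair_of_sameDiv_iff hAB hMO h, ?_⟩
  refine singleton_subset_iff.2 (mem_pair_of_sameDiv_iff hAB.symm hMO fun a b => ?_)
  rw [pair_comm, h]

theorem pair_eq_pair_of_sameDiv_iff (hAB : Disjoint A B) (hMO : Disjoint M O)
    (h : ∀ a b, SameDiv {A, B} a b ↔ SameDiv {M, O} a b) :
    ({A, B} : Finset (Finset α)) = {M, O} :=
  (pair_subset_pair_of_sameDiv_iff hAB hMO h).antisymm
    (pair_subset_pair_of_sameDiv_iff hMO hAB fun a b => (h a b).symm)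

end Partition

def unitDivs (δ : Finset (Finset ℕ)) (T : Finset ℕ) : Finset (Finset ℕ) :=
  if ∃ dv ∈ δ, T ⊆ dv then {T, ∅} else T.image fun a => {a}

theorem fudps_snd (X : PreDPS) :
    (Fudps X).2 = X.2.biUnion fun D =>
      ((X.1 \ D.1).powersetCard 2).image fun T => (D.1, unitDivs D.2 T) := rfl

theorem sameDiv_iff_of_unitDivs_eq {δ δ' : Finset (Finset ℕ)} {a b : ℕ} {T : Finset ℕ}
    (h : unitDivs δ {a, b} = unitDivs δ' T) : T = {a, b} ∧ (SameDiv δ a b ↔ SameDiv δ' a b) := by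
  have hsub : ∀ ε : Finset (Finset ℕ), (∃ dv ∈ ε, {a, b} ⊆ dv) ↔ SameDiv ε a b := by
    simp [SameDiv, insert_subset_iff]
  unfold unitDivs at h
  split_ifs at h with h₁ h₂ h₂
  · have hT : ({a, b} : Finset ℕ) ∈ ({T, ∅} : Finset (Finset ℕ)) := h ▸ mem_insert_self _ _
    obtain rfl : T = {a, b} := by
      rcases mem_insert.1 hT with hT | hT
      · exact hT.symm
      · exact absurd (mem_singleton.1 hT) (insert_ne_empty a {b})
    exact ⟨rfl, iff_of_true ((hsub δ).1 h₁) ((hsub δ').1 h₂)⟩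
  · have : (∅ : Finset ℕ) ∈ T.image fun a => {a} := h ▸ by simp
    simp at this
  · have : (∅ : Finset ℕ) ∈ ({a, b} : Finset ℕ).image fun a => {a} := h ▸ by simp
    simp at this
  · obtain rfl : T = {a, b} := (image_injective singleton_injective h).symm
    exact ⟨rfl, iff_of_false (mt (hsub δ).2 h₁) (mt (hsub δ').2 h₂)⟩

theorem IsSdps.exists_sameDiv_iff {X Y : PreDPS} {Ps : Finset ℕ} (hY : IsSdps X Ps Y)
    {D : Dividon} (hD : D ∈ Y.2) {a b : ℕ} (ha : a ∈ Ps \ D.1) (hb : b ∈ Ps \ D.1)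
    (hab : a ≠ b) : ∃ D' ∈ X.2, D'.1 = D.1 ∧ (SameDiv D.2 a b ↔ SameDiv D'.2 a b) := by
  obtain ⟨-, -, -, hY1, hF⟩ := hY
  have hT : {a, b} ∈ (Y.1 \ D.1).powersetCard 2 := by
    rw [hY1, mem_powersetCard, insert_subset_iff, singleton_subset_iff, card_pair hab]
    exact ⟨⟨ha, hb⟩, rfl⟩
  have hmem : (D.1, unitDivs D.2 {a, b}) ∈ (Fudps X).2 := by
    have hmemY : (D.1, unitDivs D.2 {a, b}) ∈ (Fudps Y).2 := by
      rw [fudps_snd]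
      exact mem_biUnion.2 ⟨D, hD, mem_image_of_mem _ hT⟩
    rw [hF] at hmemY
    exact (mem_filter.1 hmemY).1
  rw [fudps_snd] at hmem
  obtain ⟨D', hD', T, -, hEq⟩ := by simpa only [mem_biUnion, mem_image] using hmem
  obtain ⟨hd, hunit⟩ := Prod.mk.inj hEq
  exact ⟨D', hD', hd, (sameDiv_iff_of_unitDivs_eq hunit.symm).2⟩

def midDiv (P d : Finset ℕ) : Finset ℕ :=
  P.filter fun p => (∃ i ∈ d, i < p) ∧ ∃ j ∈ d, p < j

def outDiv (P d : Finset ℕ) : Finset ℕ :=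
  P.filter fun p => (∀ i ∈ d, p < i) ∨ ∀ i ∈ d, i < p

def convDivs (P d : Finset ℕ) : Finset (Finset ℕ) := {midDiv P d, outDiv P d}

theorem convN_snd (n : ℕ) :
    (ConvN n).2 = ((Icc 1 n).powersetCard 2).image fun d => (d, convDivs (Icc 1 n) d) := rfl

theorem snd_eq_convDivs_of_mem_convN {n : ℕ} {D : Dividon} (hD : D ∈ (ConvN n).2) :
    D.2 = convDivs (Icc 1 n) D.1 := by
  rw [convN_snd] at hD
  obtain ⟨d, -, rfl⟩ := mem_image.1 hD
  rfl

theorem disjoint_midDiv_outDiv (P d : Finset ℕ) : Disjoint (midDiv P d) (outDiv P d) := by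
  refine disjoint_filter.2 fun p _ ⟨⟨i, hi, hip⟩, ⟨j, hj, hpj⟩⟩ h => ?_
  rcases h with h | h
  · exact lt_asymm (h i hi) hip
  · exact lt_asymm (h j hj) hpj

theorem sameDiv_convDivs_self {P d : Finset ℕ} (hd : d.card = 2) (a : ℕ) :
    SameDiv (convDivs P d) a a ↔ a ∈ P \ d := by
  obtain ⟨i, j, hij, rfl⟩ := card_eq_two.1 hd
  simp only [SameDiv, convDivs, midDiv, outDiv, mem_insert, mem_singleton, mem_filter,
    mem_sdiff, exists_eq_or_imp, exists_eq_left, forall_eq_or_imp, forall_eq, and_self]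
  rw [← and_or_left]
  exact and_congr_right fun _ => by omega

theorem sameDiv_convDivs_of_subset {P Q d : Finset ℕ} (hPQ : P ⊆ Q) (a b : ℕ) :
    SameDiv (convDivs P d) a b ↔ a ∈ P ∧ b ∈ P ∧ SameDiv (convDivs Q d) a b := by
  have hmid : ∀ x, x ∈ midDiv P d ↔ x ∈ P ∧ x ∈ midDiv Q d := fun x => by
    simp only [midDiv, mem_filter]
    exact ⟨fun h => ⟨h.1, hPQ h.1, h.2⟩, fun h => ⟨h.1, h.2.2⟩⟩
  have hout : ∀ x, x ∈ outDiv P d ↔ x ∈ P ∧ x ∈ outDiv Q d := fun x => by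
    simp only [outDiv, mem_filter]
    exact ⟨fun h => ⟨h.1, hPQ h.1, h.2⟩, fun h => ⟨h.1, h.2.2⟩⟩
  simp only [SameDiv, convDivs, mem_insert, mem_singleton, exists_eq_or_imp, exists_eq_left,
    hmid, hout]
  tauto

theorem image_midDiv {P d : Finset ℕ} {f : ℕ → ℕ} (hf : StrictMonoOn f P) (hd : d ⊆ P) :
    (midDiv P d).image f = midDiv (P.image f) (d.image f) := by
  rw [midDiv, midDiv, filter_image]
  congr 1
  ext p
  simp only [mem_filter, exists_mem_image]
  exact and_congr_right fun hp => and_congr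
    (exists_congr fun i => and_congr_right fun hi => (hf.lt_iff_lt (hd hi) hp).symm)
    (exists_congr fun i => and_congr_right fun hi => (hf.lt_iff_lt hp (hd hi)).symm)

theorem image_outDiv {P d : Finset ℕ} {f : ℕ → ℕ} (hf : StrictMonoOn f P) (hd : d ⊆ P) :
    (outDiv P d).image f = outDiv (P.image f) (d.image f) := by
  rw [outDiv, outDiv, filter_image]
  congr 1
  ext p
  simp only [mem_filter, forall_mem_image]
  exact and_congr_right fun hp => or_congr
    (forall₂_congr fun i hi => (hf.lt_iff_lt hp (hd hi)).symm)
    (forall₂_congr fun i hi => (hf.lt_iff_lt (hd hi) hp).symm)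

theorem convDivs_image {P d : Finset ℕ} {f : ℕ → ℕ} (hf : StrictMonoOn f P) (hd : d ⊆ P) :
    (convDivs P d).image (image f) = convDivs (P.image f) (d.image f) := by
  rw [convDivs, convDivs, image_insert, image_singleton, image_midDiv hf hd, image_outDiv hf hd]

theorem IsSdps.snd_eq_convDivs {n : ℕ} {Ps : Finset ℕ} {Y : PreDPS} (hY : IsSdps (ConvN n) Ps Y)
    {D : Dividon} (hD : D ∈ Y.2) : D.2 = convDivs Ps D.1 := by
  obtain ⟨hPs, -, hDPS, hY1, -⟩ := id hY
  obtain ⟨hd, -, A, B, -, hδ, hAB, hABi⟩ := hDPS.2.2.1 D hD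
  rw [hY1] at hAB
  have hYself : ∀ a, SameDiv D.2 a a ↔ a ∈ Ps \ D.1 := by
    rw [hδ, ← hAB]; simp [SameDiv]
  have hC : ∀ a b, SameDiv D.2 a b ↔ SameDiv (convDivs Ps D.1) a b := by
    intro a b
    by_cases hab : a = b
    · subst hab; rw [hYself, sameDiv_convDivs_self hd]
    by_cases hmem : a ∈ Ps \ D.1 ∧ b ∈ Ps \ D.1
    · obtain ⟨D', hD', hd', hiff⟩ := hY.exists_sameDiv_iff hD hmem.1 hmem.2 hab
      rw [hiff, snd_eq_convDivs_of_mem_convN hD', hd', sameDiv_convDivs_of_subset hPs]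
      exact ⟨fun h => ⟨(mem_sdiff.1 hmem.1).1, (mem_sdiff.1 hmem.2).1, h⟩, fun h => h.2.2⟩
    · refine iff_of_false (fun ⟨X, hX, haX, hbX⟩ => hmem ⟨?_, ?_⟩)
        (fun ⟨X, hX, haX, hbX⟩ => hmem ⟨?_, ?_⟩)
      · exact (hYself a).1 ⟨X, hX, haX, haX⟩
      · exact (hYself b).1 ⟨X, hX, hbX, hbX⟩
      · exact (sameDiv_convDivs_self hd a).1 ⟨X, hX, haX, haX⟩
      · exact (sameDiv_convDivs_self hd b).1 ⟨X, hX, hbX, hbX⟩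
  rw [hδ, convDivs]
  rw [hδ] at hC
  exact pair_eq_pair_of_sameDiv_iff (disjoint_iff_inter_eq_empty.2 hABi)
    (disjoint_midDiv_outDiv _ _) hC

theorem isom_convN_of_strictMonoOn {Y : PreDPS} {k : ℕ} {f : ℕ → ℕ} (hf : StrictMonoOn f Y.1)
    (himg : Y.1.image f = Icc 1 k)
    (hdiv : ∀ D ∈ Y.2, D.1 ⊆ Y.1 ∧ D.1.card = 2 ∧ D.2 = convDivs Y.1 D.1) :
    Isom Y (ConvN k) := by
  refine ⟨f, ?_, fun D hD => ?_⟩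
  · have := hf.injOn.bijOn_image
    rwa [← coe_image, himg] at this
  obtain ⟨hsub, hcard, hδ⟩ := hdiv D hD
  rw [convN_snd, mem_image]
  refine ⟨D.1.image f, mem_powersetCard.2 ⟨himg ▸ image_subset_image hsub, ?_⟩, ?_⟩
  · rw [card_image_of_injOn (hf.injOn.mono (coe_subset.2 hsub)), hcard]
  · rw [hδ, convDivs_image hf hsub, himg]

def squeeze (m p : ℕ) : ℕ := if p < m then p else p - 1

theorem squeeze_strictMonoOn (m : ℕ) : StrictMonoOn (squeeze m) {p | p ≠ m} := by
  intro p hp q hq hpq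
  simp only [Set.mem_ofPred_eq] at hp hq
  unfold squeeze
  split_ifs <;> omega

theorem image_squeeze_erase_Icc {n m : ℕ} (hm : m ∈ Icc 1 n) :
    ((Icc 1 n).erase m).image (squeeze m) = Icc 1 (n - 1) := by
  rw [mem_Icc] at hm
  ext q
  simp only [mem_image, mem_erase, mem_Icc, squeeze]
  constructor
  · rintro ⟨p, ⟨hpm, hp⟩, rfl⟩
    split_ifs <;> omega
  · intro hq
    exact ⟨if q < m then q else q + 1, by split_ifs <;> omega⟩

theorem stmt_10_general (n : ℕ) (Ps : Finset ℕ) (hPs : Ps.card = n - 1)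
    (Y : PreDPS) (hY : IsSdps (ConvN n) Ps Y) :
    Isom Y (ConvN (n - 1)) := by
  obtain ⟨hsub, hc4, hDPS, hY1, -⟩ := id hY
  obtain ⟨m, hmPs, hIcc⟩ : ∃ m ∉ Ps, insert m Ps = Icc 1 n :=
    exists_eq_insert_iff.2 ⟨hsub, by rw [Nat.card_Icc]; omega⟩
  have hm : m ∈ Icc 1 n := hIcc ▸ mem_insert_self m Ps
  have hPm : Ps = (Icc 1 n).erase m := by rw [← hIcc, erase_insert hmPs]
  refine isom_convN_of_strictMonoOn (f := squeeze m) ?_ ?_ fun D hD => ?_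
  · rw [hY1, hPm, coe_erase]
    exact (squeeze_strictMonoOn m).mono fun p hp => hp.2
  · rw [hY1, hPm, image_squeeze_erase_Icc hm]
  · obtain ⟨hcard, hdsub, -⟩ := hDPS.2.2.1 D hD
    exact ⟨hdsub, hcard, hY1 ▸ hY.snd_eq_convDivs hD⟩

/-- For every `n ≥ 4`, every sub div point set of `n-1` points of Conv_n is
isomorphic to Conv_{n-1}. -/
theorem stmt_10 (n : ℕ) (hn : 4 ≤ n) (Ps : Finset ℕ) (hPs : Ps.card = n - 1)
    (Y : PreDPS) (hY : IsSdps (ConvN n) Ps Y) :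
    Isom Y (ConvN (n - 1)) :=
  stmt_10_general n Ps hPs Y hY
end

section
/- For all natural numbers k and m with 4 ≤ m < k, every div point set that has a convexity of k also has a convexity of m; that is, if some sub div point set of X is isomorphic to Conv_k then some sub div point set of X is isomorphic to Conv_m. -/
open Finset

/-!
A sub div point set of a sub div point set is again one, because restricting the divs of a div
point set to a subset `Ps` of its points (and keeping the dividers inside `Ps`) commutes with
`F_udps` followed by the filter `ξ(D) ⊆ Ps`. Pulling `{1, …, m}` back along an isomorphism with
Conv_k therefore yields a sub div point set of `X` isomorphic to the restriction of Conv_k to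
`{1, …, m}`, which is Conv_m.
-/

def restrictDividon (Ps : Finset ℕ) (D : Dividon) : Dividon := (D.1, D.2.image (· ∩ Ps))

def restrictDPS (Ps : Finset ℕ) (Y : PreDPS) : PreDPS :=
  (Ps, (Y.2.filter fun D => D.1 ⊆ Ps).image (restrictDividon Ps))

def unitDividon (D : Dividon) (T : Finset ℕ) : Dividon :=
  (D.1, if ∃ dv ∈ D.2, T ⊆ dv then ({T, ∅} : Finset (Finset ℕ)) else T.image fun a => {a})

lemma mem_restrictDPS {Ps : Finset ℕ} {Y : PreDPS} {D' : Dividon} :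
    D' ∈ (restrictDPS Ps Y).2 ↔ ∃ D ∈ Y.2, D.1 ⊆ Ps ∧ restrictDividon Ps D = D' := by
  simp only [restrictDPS, mem_image, mem_filter, and_assoc]

lemma mem_Fudps {X : PreDPS} {u : Dividon} :
    u ∈ (Fudps X).2 ↔ ∃ D ∈ X.2, ∃ T ⊆ X.1 \ D.1, T.card = 2 ∧ unitDividon D T = u := by
  simp only [Fudps, unitDividon, mem_biUnion, mem_image, mem_powersetCard, and_assoc]

lemma xi_unitDividon (D : Dividon) (T : Finset ℕ) : xi (unitDividon D T) = D.1 ∪ T := by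
  unfold xi unitDividon unionOf
  split_ifs
  · simp
  · ext; simp

lemma unitDividon_restrictDividon {Ps T : Finset ℕ} (hT : T ⊆ Ps) (D : Dividon) :
    unitDividon (restrictDividon Ps D) T = unitDividon D T := by
  have : (∃ dv ∈ D.2.image (· ∩ Ps), T ⊆ dv) ↔ ∃ dv ∈ D.2, T ⊆ dv := by
    simp only [exists_mem_image, subset_inter_iff, hT, and_true]
  simp only [unitDividon, restrictDividon, this]

lemma Fudps_restrictDPS {Y : PreDPS} {Ps : Finset ℕ} (hPs : Ps ⊆ Y.1) :
    (Fudps (restrictDPS Ps Y)).2 = (Fudps Y).2.filter fun u => xi u ⊆ Ps := by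
  ext u
  rw [mem_filter, mem_Fudps, mem_Fudps]
  constructor
  · rintro ⟨D', hD', T, hT, hT2, rfl⟩
    obtain ⟨D, hD, hdPs, rfl⟩ := mem_restrictDPS.1 hD'
    have hTPs : T ⊆ Ps := hT.trans sdiff_subset
    rw [unitDividon_restrictDividon hTPs, xi_unitDividon]
    exact ⟨⟨D, hD, T, hT.trans (sdiff_subset_sdiff hPs le_rfl), hT2, rfl⟩,
      union_subset hdPs hTPs⟩
  · rintro ⟨⟨D, hD, T, hT, hT2, rfl⟩, hxi⟩
    rw [xi_unitDividon, union_subset_iff] at hxi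
    exact ⟨restrictDividon Ps D, mem_restrictDPS.2 ⟨D, hD, hxi.1, rfl⟩, T,
      subset_sdiff.2 ⟨hxi.2, (subset_sdiff.1 hT).2⟩, hT2, unitDividon_restrictDividon hxi.2 D⟩

lemma powersetCard_filter_subset {s t : Finset ℕ} (h : t ⊆ s) (n : ℕ) :
    (s.powersetCard n).filter (· ⊆ t) = t.powersetCard n := by
  ext u
  simp only [mem_filter, mem_powersetCard]
  exact ⟨fun hu => ⟨hu.2, hu.1.2⟩, fun hu => ⟨⟨hu.1.trans h, hu.2⟩, hu.1⟩⟩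

lemma IsDividon.restrict {P Ps : Finset ℕ} {D : Dividon} (hD : IsDividon P D) (hPs : Ps ⊆ P)
    (hd : D.1 ⊆ Ps) (hcard : 2 < Ps.card) : IsDividon Ps (restrictDividon Ps D) := by
  obtain ⟨hc, -, A, B, -, hδ, hu, hi⟩ := hD
  have hun : A ∩ Ps ∪ B ∩ Ps = Ps \ D.1 := by
    rw [← union_inter_distrib_right, hu, sdiff_inter_right_comm, inter_eq_right.2 hPs]
  have hdisj : A ∩ Ps ∩ (B ∩ Ps) = ∅ := by
    rw [← inter_inter_distrib_right, hi, empty_inter]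
  have hne : (Ps \ D.1).Nonempty := by
    rw [← card_pos, card_sdiff_of_subset hd]
    omega
  refine ⟨hc, hd, A ∩ Ps, B ∩ Ps, ?_, by simp [restrictDividon, hδ, image_insert], hun, hdisj⟩
  intro he
  rw [he, inter_self] at hdisj
  rw [he, union_self, hdisj] at hun
  exact hne.ne_empty hun.symm

lemma IsDPS.injOn_fst {Y : PreDPS} (hY : IsDPS Y) : Set.InjOn Prod.fst (Y.2 : Set Dividon) :=
  fun _ h₁ _ h₂ he => hY.2.2.2 _ h₁ _ h₂ he

lemma IsDPS.image_fst {Y : PreDPS} (hY : IsDPS Y) : Y.2.image Prod.fst = Y.1.powersetCard 2 := by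
  refine eq_of_subset_of_card_le ?_ ?_
  · intro d hd
    obtain ⟨D, hD, rfl⟩ := mem_image.1 hd
    exact mem_powersetCard.2 ⟨(hY.2.2.1 D hD).2.1, (hY.2.2.1 D hD).1⟩
  · rw [card_powersetCard, card_image_of_injOn hY.injOn_fst, hY.2.1]

lemma IsDPS.restrict {Y : PreDPS} {Ps : Finset ℕ} (hY : IsDPS Y) (hPs : Ps ⊆ Y.1)
    (hcard : 2 < Ps.card) : IsDPS (restrictDPS Ps Y) := by
  have hinj : Set.InjOn Prod.fst (Y.2.filter (fun D => D.1 ⊆ Ps) : Set Dividon) :=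
    hY.injOn_fst.mono (filter_subset _ _)
  have hinj' : Set.InjOn (restrictDividon Ps) (Y.2.filter (fun D => D.1 ⊆ Ps) : Set Dividon) :=
    fun _ h₁ _ h₂ he => hinj h₁ h₂ (Prod.ext_iff.1 he).1
  refine ⟨(card_pos.1 (by omega) : Ps.Nonempty), ?_, ?_, ?_⟩
  · calc ((Y.2.filter fun D => D.1 ⊆ Ps).image (restrictDividon Ps)).card
          = ((Y.2.image Prod.fst).filter (· ⊆ Ps)).card := by
          rw [card_image_of_injOn hinj', filter_image, card_image_of_injOn hinj]
      _ = Nat.choose Ps.card 2 := by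
          rw [hY.image_fst, powersetCard_filter_subset hPs, card_powersetCard]
  · intro D' hD'
    obtain ⟨D, hD, hdPs, rfl⟩ := mem_restrictDPS.1 hD'
    exact (hY.2.2.1 D hD).restrict hPs hdPs hcard
  · rintro _ h₁ _ h₂ he
    obtain ⟨D₁, hD₁, hd₁, rfl⟩ := mem_restrictDPS.1 h₁
    obtain ⟨D₂, hD₂, hd₂, rfl⟩ := mem_restrictDPS.1 h₂
    rw [hinj (mem_filter.2 ⟨hD₁, hd₁⟩) (mem_filter.2 ⟨hD₂, hd₂⟩) he]

lemma IsSdps.restrict {X Y : PreDPS} {Ps Ps' : Finset ℕ} (hS : IsSdps X Ps Y) (hsub : Ps' ⊆ Ps)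
    (h4 : 4 ≤ Ps'.card) : IsSdps X Ps' (restrictDPS Ps' Y) := by
  obtain ⟨hPsX, -, hY, rfl, hF⟩ := hS
  refine ⟨hsub.trans hPsX, h4, hY.restrict hsub (by omega), rfl, ?_⟩
  rw [Fudps_restrictDPS hsub, hF, filter_filter]
  exact filter_congr fun u _ => ⟨fun h => h.2, fun h => ⟨h.trans hsub, h⟩⟩

lemma image_inter_filter_mem {f : ℕ → ℕ} {Ps Q v : Finset ℕ} (hv : v ⊆ Ps) :
    (v ∩ Ps.filter fun x => f x ∈ Q).image f = v.image f ∩ Q := by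
  ext y
  simp only [mem_image, mem_inter, mem_filter]
  constructor
  · rintro ⟨x, ⟨hxv, -, hfx⟩, rfl⟩
    exact ⟨⟨x, hxv, rfl⟩, hfx⟩
  · rintro ⟨⟨x, hxv, rfl⟩, hy⟩
    exact ⟨x, ⟨hxv, hv hxv, hy⟩, rfl⟩

lemma Isom.restrict {Y Z : PreDPS} (hY : IsDPS Y) {Q : Finset ℕ} (hQ : Q ⊆ Z.1)
    (h : Isom Y Z) : ∃ Ps ⊆ Y.1, Ps.card = Q.card ∧ Isom (restrictDPS Ps Y) (restrictDPS Q Z) := by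
  obtain ⟨f, hbij, hmap⟩ := h
  set Ps := Y.1.filter fun x => f x ∈ Q
  have hbij' : Set.BijOn f (Ps : Set ℕ) Q := by
    refine ⟨fun x hx => (mem_filter.1 hx).2, hbij.injOn.mono (filter_subset _ _), ?_⟩
    intro y hy
    obtain ⟨x, hx, rfl⟩ := hbij.surjOn (hQ hy)
    exact ⟨x, mem_filter.2 ⟨hx, hy⟩, rfl⟩
  refine ⟨Ps, filter_subset _ _, hbij'.finsetCard_eq, f, hbij', ?_⟩
  intro D' hD'
  obtain ⟨D, hD, hdPs, rfl⟩ := mem_restrictDPS.1 hD'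
  obtain ⟨-, -, A, B, -, hδ, hu, -⟩ := hY.2.2.1 D hD
  have hdivs : ∀ v ∈ D.2, v ⊆ Y.1 := by
    rw [hδ]
    have hAB : A ∪ B ⊆ Y.1 := hu ▸ sdiff_subset
    simpa using ⟨subset_union_left.trans hAB, subset_union_right.trans hAB⟩
  refine mem_restrictDPS.2 ⟨_, hmap D hD, fun y hy => ?_, ?_⟩
  · obtain ⟨x, hx, rfl⟩ := mem_image.1 hy
    exact hbij'.mapsTo (hdPs hx)
  · simp only [restrictDividon, image_image]
    congr 1
    exact image_congr fun v hv => (image_inter_filter_mem (hdivs v hv)).symm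

lemma filter_Icc_inter_Icc {m k : ℕ} (hmk : m ≤ k) (p : ℕ → Prop) [DecidablePred p] :
    (Icc 1 k).filter p ∩ Icc 1 m = (Icc 1 m).filter p := by
  rw [filter_inter, inter_eq_right.2 (Icc_subset_Icc_right hmk)]

lemma restrictDPS_ConvN {m k : ℕ} (hmk : m ≤ k) : restrictDPS (Icc 1 m) (ConvN k) = ConvN m := by
  have hIcc : Icc 1 m ⊆ Icc 1 k := Icc_subset_Icc_right hmk
  simp only [restrictDPS, ConvN, filter_image, powersetCard_filter_subset hIcc, image_image]
  congr 1
  refine image_congr fun d _ => ?_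
  simp [restrictDividon, filter_Icc_inter_Icc hmk]

theorem stmt_11_general (k m : ℕ) (h4 : 4 ≤ m) (hmk : m < k) (X : PreDPS)
    (h : ∃ Ps Y, IsSdps X Ps Y ∧ Isom Y (ConvN k)) :
    ∃ Ps Y, IsSdps X Ps Y ∧ Isom Y (ConvN m) := by
  obtain ⟨Ps, Y, hS, hiso⟩ := h
  obtain ⟨Ps', hPs', hcard, hiso'⟩ := hiso.restrict hS.2.2.1 (Icc_subset_Icc_right hmk.le)
  refine ⟨Ps', _, hS.restrict (hS.2.2.2.1 ▸ hPs') (by simpa [hcard] using h4), ?_⟩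
  rwa [restrictDPS_ConvN hmk.le] at hiso'

/-- For `4 ≤ m < k`, every div point set with a convexity of `k` (some sub div point
set isomorphic to Conv_k) also has a convexity of `m`. -/
theorem stmt_11 (k m : ℕ) (h4 : 4 ≤ m) (hmk : m < k) (X : PreDPS) (hX : IsDPS X)
    (h : ∃ Ps Y, IsSdps X Ps Y ∧ Isom Y (ConvN k)) :
    ∃ Ps Y, IsSdps X Ps Y ∧ Isom Y (ConvN m) :=
  stmt_11_general k m h4 hmk X h
end

section
/- Let X be a finite set with |X| = v, let a ≥ 1 be a natural number, let X_sub be a (v−a)-element subset of X, and let b be a natural number with 1 ≤ b < v−a. Then there exists a (v−a)-element set S whose members are (a+b)-element sets of (v−a)-element subsets of X, such that every s ∈ S contains X_sub as a member, and for every s ∈ S and every natural number n ≥ 1, the intersection over l ∈ s of the families of n-element subsets of l has exactly C(v−a−b, n) elements. -/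
/-!
Write `m = v - a` and `Y = X \ X_sub`, so `|Y| = a`. Each member of `S` is built from a `b`-subset
`B` of `X_sub`: with `C = X_sub \ B` and `D = B ∪ Y` (of size `a + b`), take `a + b` distinct
`b`-subsets `W` of `D`, one of them `B`, having no common element, and let `s = {C ∪ W}`.
Every `C ∪ W` has `m` elements, `C ∪ B = X_sub`, and a set lies in all of them exactly when it
lies in `C`, which has `m - b` elements. Distinct `B` give distinct `s`, and there are at least
`C(m, b) ≥ m` choices of `B`.
-/

open Finset

theorem Nat.self_le_choose {n k : ℕ} (hk : 0 < k) (hkn : k < n) : n ≤ n.choose k := by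
  induction n generalizing k with
  | zero => omega
  | succ n ih =>
    obtain ⟨c, rfl⟩ : ∃ c, k = c + 1 := ⟨k - 1, by omega⟩
    rw [Nat.choose_succ_succ']
    rcases Nat.eq_zero_or_pos c with rfl | hc
    · simp only [Nat.zero_add, Nat.choose_zero_right, Nat.choose_one_right]
      omega
    · have := ih hc (by omega)
      have := Nat.choose_pos (show c + 1 ≤ n by omega)
      omega

namespace Finset

theorem ncard_setOf_card_eq_and_subset {α : Type*} (C : Finset α) (n : ℕ) :
    Set.ncard {x : Finset α | #x = n ∧ x ⊆ C} = (#C).choose n := by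
  rw [← card_powersetCard, ← Set.ncard_coe_finset]
  congr 1
  ext x
  simp only [Set.mem_ofPred_eq, mem_coe, mem_powersetCard]
  exact and_comm

variable {α : Type*} [DecidableEq α]

theorem forall_subset_union_iff {C x : Finset α} {F : Finset (Finset α)}
    (hF : ∀ e, ∃ W ∈ F, e ∉ W) : (∀ W ∈ F, x ⊆ C ∪ W) ↔ x ⊆ C := by
  refine ⟨fun h e hex => ?_, fun h W _ => h.trans subset_union_left⟩
  obtain ⟨W, hW, heW⟩ := hF e
  exact (mem_union.1 (h W hW hex)).resolve_right heW

/-- Replacing each `p ∈ B` in turn by a fixed `q ∈ D \ B` removes every element from the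
intersection. -/
theorem exists_subset_powersetCard_card_le_forall_exists_notMem {B D : Finset α}
    (hBD : B ⊆ D) (hlt : #B < #D) :
    ∃ G ⊆ D.powersetCard #B, #G ≤ #D ∧ B ∈ G ∧ ∀ e, ∃ W ∈ G, e ∉ W := by
  obtain ⟨q, hqD, hqB⟩ := exists_mem_notMem_of_card_lt_card hlt
  set swap : α → Finset α := fun p => insert q (B.erase p)
  have hswap : ∀ p ∈ B, swap p ∈ D.powersetCard #B := fun p hp =>
    mem_powersetCard.2
      ⟨insert_subset hqD ((erase_subset p B).trans hBD), by
        rw [card_insert_of_notMem (fun h => hqB (mem_of_mem_erase h)), card_erase_of_mem hp,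
          Nat.sub_add_cancel (card_pos.2 ⟨p, hp⟩)]⟩
  refine ⟨insert B (B.image swap), ?_, ?_, mem_insert_self _ _, fun e => ?_⟩
  · refine insert_subset (mem_powersetCard.2 ⟨hBD, rfl⟩) ?_
    simpa only [image_subset_iff] using hswap
  · calc #(insert B (B.image swap)) ≤ #(B.image swap) + 1 := card_insert_le _ _
      _ ≤ #B + 1 := by grw [card_image_le]
      _ ≤ #D := hlt
  · by_cases he : e ∈ B
    · refine ⟨swap e, mem_insert_of_mem (mem_image_of_mem _ he), ?_⟩
      simp only [swap, mem_insert, mem_erase, ne_eq, not_true_eq_false, false_and, or_false]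
      exact fun h => hqB (h ▸ he)
    · exact ⟨B, mem_insert_self _ _, he⟩

theorem exists_subset_powersetCard_card_eq_forall_exists_notMem {B D : Finset α}
    (hB : B.Nonempty) (hBD : B ⊆ D) (hlt : #B < #D) :
    ∃ F ⊆ D.powersetCard #B, #F = #D ∧ B ∈ F ∧ ∀ e, ∃ W ∈ F, e ∉ W := by
  obtain ⟨G, hGD, hGcard, hBG, hG⟩ :=
    exists_subset_powersetCard_card_le_forall_exists_notMem hBD hlt
  obtain ⟨F, hGF, hFD, hF⟩ := exists_subsuperset_card_eq hGD hGcard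
    (by rw [card_powersetCard]; exact Nat.self_le_choose hB.card_pos hlt)
  exact ⟨F, hFD, hF, hGF hBG, fun e => (hG e).imp fun W ⟨hW, he⟩ => ⟨hGF hW, he⟩⟩

theorem exists_family_forall_subset_iff {B C D : Finset α} (hCD : Disjoint C D)
    (hB : B.Nonempty) (hBD : B ⊆ D) (hlt : #B < #D) :
    ∃ s : Finset (Finset α), #s = #D ∧ (∀ l ∈ s, l ⊆ C ∪ D ∧ #l = #C + #B) ∧ C ∪ B ∈ s ∧
      ∀ x, (∀ l ∈ s, x ⊆ l) ↔ x ⊆ C := by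
  obtain ⟨F, hFD, hFcard, hBF, hF⟩ :=
    exists_subset_powersetCard_card_eq_forall_exists_notMem hB hBD hlt
  have hWD : ∀ W ∈ F, W ⊆ D ∧ #W = #B := fun W hW => mem_powersetCard.1 (hFD hW)
  refine ⟨F.image (C ∪ ·), ?_, ?_, mem_image_of_mem _ hBF, fun x => ?_⟩
  · rw [card_image_of_injOn, hFcard]
    intro W hW W' hW' h
    rw [← union_sdiff_cancel_left (hCD.mono_right (hWD W hW).1),
      ← union_sdiff_cancel_left (hCD.mono_right (hWD W' hW').1)]
    exact congrArg (· \ C) h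
  · simp only [forall_mem_image]
    intro W hW
    exact ⟨union_subset_union_right (hWD W hW).1, by
      rw [card_union_of_disjoint (hCD.mono_right (hWD W hW).1), (hWD W hW).2]⟩
  · rw [forall_mem_image]
    exact forall_subset_union_iff hF

theorem exists_family_forall_subset_iff_sdiff {X Xsub B : Finset α} (hXsubX : Xsub ⊆ X)
    (hBX : B ⊆ Xsub) (hB : B.Nonempty) (hlt : #Xsub < #X) :
    ∃ s : Finset (Finset α), #s = #X - #Xsub + #B ∧ (∀ l ∈ s, l ⊆ X ∧ #l = #Xsub) ∧
      Xsub ∈ s ∧ ∀ x, (∀ l ∈ s, x ⊆ l) ↔ x ⊆ Xsub \ B := by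
  have hY : #(X \ Xsub) = #X - #Xsub := card_sdiff_of_subset hXsubX
  have hD : #(B ∪ (X \ Xsub)) = #X - #Xsub + #B := by
    rw [card_union_of_disjoint (disjoint_sdiff.mono_left hBX), hY, add_comm]
  obtain ⟨s, hs, hsl, hXs, hsub⟩ :=
    exists_family_forall_subset_iff (C := Xsub \ B) (D := B ∪ (X \ Xsub))
      (disjoint_union_right.2 ⟨sdiff_disjoint, disjoint_sdiff.mono_left sdiff_subset⟩)
      hB subset_union_left (by omega)
  refine ⟨s, hD ▸ hs, fun l hl => ⟨(hsl l hl).1.trans ?_, ?_⟩, ?_, hsub⟩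
  · exact union_subset (sdiff_subset.trans hXsubX) (union_subset (hBX.trans hXsubX) sdiff_subset)
  · rw [(hsl l hl).2, card_sdiff_of_subset hBX, Nat.sub_add_cancel (card_le_card hBX)]
  · rwa [sdiff_union_of_subset hBX] at hXs

end Finset

/-- The combinatorial characteristic of sub-point-sets: given a `v`-element set `X`,
`a ≥ 1`, a `(v-a)`-element subset `X_sub` of `X`, and `1 ≤ b < v-a`, there is a
`(v-a)`-element set `S` of `(a+b)`-element sets of `(v-a)`-element subsets of `X`,
each member of `S` containing `X_sub`, such that for all `s ∈ S` and `n ≥ 1` the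
intersection over `l ∈ s` of the families of `n`-element subsets of `l` has exactly
`C(v-a-b, n)` elements. -/
theorem stmt_13 (X : Finset ℕ) (v a b : ℕ) (hv : X.card = v) (ha : 1 ≤ a)
    (Xsub : Finset ℕ) (hXsubX : Xsub ⊆ X) (hXsub : Xsub.card = v - a)
    (hb : 1 ≤ b) (hbv : b < v - a) :
    ∃ S : Finset (Finset (Finset ℕ)),
      S.card = v - a ∧
      ∀ s ∈ S, s.card = a + b ∧
        (∀ l ∈ s, l ⊆ X ∧ l.card = v - a) ∧
        Xsub ∈ s ∧
        ∀ n : ℕ, 1 ≤ n →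
          Set.ncard {x : Finset ℕ | x.card = n ∧ ∀ l ∈ s, x ⊆ l} =
            Nat.choose (v - a - b) n := by
  obtain ⟨𝔅, h𝔅, h𝔅card⟩ := exists_subset_card_eq (s := Xsub.powersetCard b) (n := v - a)
    (by rw [card_powersetCard, hXsub]; exact Nat.self_le_choose hb hbv)
  simp only [subset_iff, mem_powersetCard] at h𝔅
  have hblock : ∀ B ∈ 𝔅, ∃ s : Finset (Finset ℕ), #s = #X - #Xsub + #B ∧
      (∀ l ∈ s, l ⊆ X ∧ #l = #Xsub) ∧ Xsub ∈ s ∧ ∀ x, (∀ l ∈ s, x ⊆ l) ↔ x ⊆ Xsub \ B :=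
    fun B hB => exists_family_forall_subset_iff_sdiff hXsubX (h𝔅 hB).1
      (card_pos.1 (by rw [(h𝔅 hB).2]; omega)) (by omega)
  choose! s hs using hblock
  refine ⟨𝔅.image s, ?_, ?_⟩
  · rw [card_image_of_injOn, h𝔅card]
    intro B hB B' hB' h
    have hC : Xsub \ B = Xsub \ B' := eq_of_forall_le_iff fun x =>
      ((hs B hB).2.2.2 x).symm.trans (by rw [show s B = s B' from h]; exact (hs B' hB').2.2.2 x)
    exact (sdiff_right_inj (h𝔅 hB).1 (h𝔅 hB').1).1 hC
  · simp only [forall_mem_image]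
    intro B hB
    obtain ⟨hcard, hl, hXs, hsub⟩ := hs B hB
    obtain ⟨hBX, hBb⟩ := h𝔅 hB
    refine ⟨by omega, fun l hl' => ⟨(hl l hl').1, (hl l hl').2.trans hXsub⟩, hXs, fun n _ => ?_⟩
    simp_rw [hsub, ncard_setOf_card_eq_and_subset, card_sdiff_of_subset hBX, hXsub, hBb]
end

section
/- If a unit div point set (P,Ω) is in the class UDPS⁺ and P' is a subset of P with |P'| ≥ 4, then the pair (P', {D ∈ Ω : ξ(D) ⊆ P'}) is a unit div point set and is also in UDPS⁺. -/
open Finset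

/-! A unit dividon `D` is determined by its signature `(d, ⋃δ)`, a 2-subset `d` of the points
together with a 2-subset of the remaining points. Injectivity of the signature and the
cardinality axiom make it a bijection from `Ω` onto all such pairs over `P`; a unit dividon lies
over `P'` exactly when its signature is a pair over `P'`, so the filtered set is in bijection with
the pairs over `P'` and has the right cardinality. The laws are universal statements about
dividons and 4-point sets, so they pass to any subfamily. -/

lemma unionOf_pair (A B : Finset ℕ) : unionOf {A, B} = A ∪ B := by
  simp [unionOf]

def signature (D : Dividon) : (_ : Finset ℕ) × Finset ℕ := ⟨D.1, unionOf D.2⟩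

def signatures (Q : Finset ℕ) : Finset ((_ : Finset ℕ) × Finset ℕ) :=
  (Q.powersetCard 2).sigma fun d => (Q \ d).powersetCard 2

lemma mem_signatures {Q d u : Finset ℕ} :
    ⟨d, u⟩ ∈ signatures Q ↔ (d ⊆ Q ∧ d.card = 2) ∧ u ⊆ Q \ d ∧ u.card = 2 := by
  simp only [signatures, mem_sigma, mem_powersetCard]

lemma card_signatures (Q : Finset ℕ) :
    (signatures Q).card = Nat.choose Q.card 2 * Nat.choose (Q.card - 2) 2 := by
  rw [signatures, card_sigma, sum_congr rfl fun d hd => ?_, sum_const, card_powersetCard,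
    smul_eq_mul]
  rw [mem_powersetCard] at hd
  rw [card_powersetCard, card_sdiff_of_subset hd.1, hd.2]

lemma signatures_mono {P Q : Finset ℕ} (h : P ⊆ Q) : signatures P ⊆ signatures Q := by
  rintro ⟨d, u⟩ hdu
  rw [mem_signatures] at hdu ⊢
  exact ⟨⟨hdu.1.1.trans h, hdu.1.2⟩, hdu.2.1.trans (sdiff_subset_sdiff h le_rfl), hdu.2.2⟩

namespace IsUnitDividon

variable {P : Finset ℕ} {D : Dividon}

lemma card_unionOf (hD : IsUnitDividon P D) : (unionOf D.2).card = 2 := by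
  obtain ⟨-, -, A, B, -, hδ, hcard, -⟩ := hD
  rwa [hδ, unionOf_pair]

lemma unionOf_subset (hD : IsUnitDividon P D) : unionOf D.2 ⊆ P \ D.1 := by
  obtain ⟨-, -, A, B, -, hδ, -, hsub, -⟩ := hD
  rwa [hδ, unionOf_pair]

lemma signature_mem (hD : IsUnitDividon P D) : signature D ∈ signatures P :=
  mem_signatures.mpr ⟨⟨hD.2.1, hD.1⟩, hD.unionOf_subset, hD.card_unionOf⟩

lemma xi_subset_iff (hD : IsUnitDividon P D) (Q : Finset ℕ) :
    xi D ⊆ Q ↔ signature D ∈ signatures Q := by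
  have hdisj := (subset_sdiff.mp hD.unionOf_subset).2
  rw [signature, mem_signatures, xi, union_subset_iff, subset_sdiff]
  exact ⟨fun h => ⟨⟨h.1, hD.1⟩, ⟨h.2, hdisj⟩, hD.card_unionOf⟩, fun h => ⟨h.1.1, h.2.1.1⟩⟩

lemma of_xi_subset (hD : IsUnitDividon P D) {Q : Finset ℕ} (hQ : xi D ⊆ Q) :
    IsUnitDividon Q D := by
  obtain ⟨h2, -, A, B, hAB, hδ, hcard, hAB_sub, hdisj⟩ := hD
  rw [xi, union_subset_iff, hδ, unionOf_pair] at hQ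
  exact ⟨h2, hQ.1, A, B, hAB, hδ, hcard,
    subset_sdiff.mpr ⟨hQ.2, (subset_sdiff.mp hAB_sub).2⟩, hdisj⟩

end IsUnitDividon

def subUDPS (U : PreDPS) (P' : Finset ℕ) : PreDPS := (P', U.2.filter fun D => xi D ⊆ P')

namespace IsUDPS

variable {U : PreDPS}

lemma injOn_signature (hU : IsUDPS U) : Set.InjOn signature U.2 := by
  intro D₁ h₁ D₂ h₂ heq
  simp only [signature, Sigma.mk.inj_iff, heq_eq_eq] at heq
  exact hU.2.2.2 D₁ h₁ D₂ h₂ heq.1 heq.2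

lemma image_signature (hU : IsUDPS U) : U.2.image signature = signatures U.1 := by
  refine eq_of_subset_of_card_le ?_ ?_
  · exact image_subset_iff.mpr fun D hD => (hU.2.2.1 D hD).signature_mem
  · rw [card_signatures, card_image_of_injOn hU.injOn_signature, hU.2.1]

lemma image_signature_subUDPS (hU : IsUDPS U) {P' : Finset ℕ} (hsub : P' ⊆ U.1) :
    (subUDPS U P').2.image signature = signatures P' := by
  ext s
  simp only [subUDPS, mem_image, mem_filter]
  constructor
  · rintro ⟨D, ⟨hD, hxi⟩, rfl⟩
    exact ((hU.2.2.1 D hD).xi_subset_iff P').mp hxi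
  · intro hs
    obtain ⟨D, hD, rfl⟩ := mem_image.mp (hU.image_signature ▸ signatures_mono hsub hs)
    exact ⟨D, ⟨hD, ((hU.2.2.1 D hD).xi_subset_iff P').mpr hs⟩, rfl⟩

lemma subUDPS_of_subset (hU : IsUDPS U) {P' : Finset ℕ} (hsub : P' ⊆ U.1) (hP' : P'.Nonempty) :
    IsUDPS (subUDPS U P') := by
  have hinj : Set.InjOn signature (subUDPS U P').2 :=
    hU.injOn_signature.mono (coe_subset.mpr (filter_subset _ _))
  refine ⟨hP', ?_, fun D hD => ?_, fun D₁ h₁ D₂ h₂ => ?_⟩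
  · rw [← card_image_of_injOn hinj, hU.image_signature_subUDPS hsub, card_signatures, subUDPS]
  · rw [subUDPS, mem_filter] at hD
    exact (hU.2.2.1 D hD.1).of_xi_subset hD.2
  · exact hU.2.2.2 D₁ (mem_filter.mp h₁).1 D₂ (mem_filter.mp h₂).1

end IsUDPS

lemma LawsUDPS.mono {U V : PreDPS} (hU : LawsUDPS U) (hP : V.1 ⊆ U.1) (hΩ : V.2 ⊆ U.2) :
    LawsUDPS V := by
  obtain ⟨hU1, hU2, hU3⟩ := hU
  refine ⟨fun R hR hR4 D₁ h₁ D₂ h₂ D₃ h₃ => ?_, fun R hR hR4 D₁ h₁ D₂ h₂ D₃ h₃ => ?_,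
    fun R hR hR4 D₁ h₁ D₂ h₂ D₃ h₃ => ?_⟩
  · exact hU1 R (hR.trans hP) hR4 D₁ (hΩ h₁) D₂ (hΩ h₂) D₃ (hΩ h₃)
  · exact hU2 R (hR.trans hP) hR4 D₁ (hΩ h₁) D₂ (hΩ h₂) D₃ (hΩ h₃)
  · exact hU3 R (hR.trans hP) hR4 D₁ (hΩ h₁) D₂ (hΩ h₂) D₃ (hΩ h₃)

/-- If a unit div point set `(P,Ω)` is in UDPS⁺ and `P' ⊆ P` with `|P'| ≥ 4`, then
`(P', {D ∈ Ω : ξ(D) ⊆ P'})` is a unit div point set in UDPS⁺. -/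
theorem stmt_15 (U : PreDPS) (hU : IsUDPS U) (hplus : LawsUDPS U)
    (P' : Finset ℕ) (hsub : P' ⊆ U.1) (h4 : 4 ≤ P'.card) :
    IsUDPS (P', U.2.filter fun D => xi D ⊆ P') ∧
    LawsUDPS (P', U.2.filter fun D => xi D ⊆ P') :=
  ⟨hU.subUDPS_of_subset hsub (card_pos.mp (by omega)), hplus.mono hsub (filter_subset _ _)⟩
end
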